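/- arXiv:2101.06027 — 2 statements merged into one kernel-verified Lean document; each statement's English description precedes it below -/
import Mathlib

section
/- An n×n tridiagonal matrix T with diagonal entries a_i, superdiagonal entries b_i ≥ 0, subdiagonal entries c_i ≥ 0, satisfying the dominance condition a_i ≥ b_i + c_{i-1} for all i (with b_n := 0, c_0 := 0), is totally nonnegative: every minor of T is nonnegative. -/
open Matrix Polynomial

/-- Number of sign changes in a list of reals (adjacent pairs with negative product). -/
noncomputable def countSignChanges (l : List ℝ) : ℕ :=
  ((l.zip l.tail).filter (fun p => decide (p.1 * p.2 < 0))).length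

/-- `s⁻(z)`: number of sign changes after deleting all zero entries. -/
noncomputable def sMinus {n : ℕ} (z : Fin n → ℝ) : ℕ :=
  countSignChanges ((List.ofFn z).filter (fun x => decide (x ≠ 0)))

/-- `y` is obtained from `z` by replacing every zero entry by `+1` or `-1`. -/
def IsCompletion {n : ℕ} (z y : Fin n → ℝ) : Prop :=
  ∀ i, (z i ≠ 0 ∧ y i = z i) ∨ (z i = 0 ∧ (y i = 1 ∨ y i = -1))

/-- `s⁺(z)`: maximal number of sign changes over all completions of `z`. -/
noncomputable def sPlus {n : ℕ} (z : Fin n → ℝ) : ℕ :=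
  sSup { m | ∃ y : Fin n → ℝ, IsCompletion z y ∧ m = countSignChanges (List.ofFn y) }

/-- All minors of `A` are nonnegative. -/
def TotallyNonneg {n : ℕ} (A : Matrix (Fin n) (Fin n) ℝ) : Prop :=
  ∀ (k : ℕ) (r c : Fin k → Fin n), StrictMono r → StrictMono c →
    0 ≤ (A.submatrix r c).det

/-- All minors of `A` are positive. -/
def TotallyPos {n : ℕ} (A : Matrix (Fin n) (Fin n) ℝ) : Prop :=
  ∀ (k : ℕ) (r c : Fin k → Fin n), StrictMono r → StrictMono c →
    0 < (A.submatrix r c).det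

/-- `A` is oscillatory: totally nonnegative and some positive power is totally positive. -/
def Oscillatory {n : ℕ} (A : Matrix (Fin n) (Fin n) ℝ) : Prop :=
  TotallyNonneg A ∧ ∃ k : ℕ, 0 < k ∧ TotallyPos (A ^ k)

/-- Irreducibility of a matrix. -/
def MatIrreducible {n : ℕ} (A : Matrix (Fin n) (Fin n) ℝ) : Prop :=
  ∀ S : Set (Fin n), S.Nonempty → S ≠ Set.univ → ∃ i ∈ S, ∃ j ∈ Sᶜ, A i j ≠ 0

/-- `A ∈ M⁺`: tridiagonal with positive super- and sub-diagonal entries. -/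
def MemMplus {n : ℕ} (A : Matrix (Fin n) (Fin n) ℝ) : Prop :=
  (∀ i j : Fin n, ((i : ℕ) + 1 < (j : ℕ) ∨ (j : ℕ) + 1 < (i : ℕ)) → A i j = 0) ∧
  (∀ i j : Fin n, ((i : ℕ) + 1 = (j : ℕ) ∨ (j : ℕ) + 1 = (i : ℕ)) → 0 < A i j)


private lemma sa_one_zero {m : ℕ} : (1 : Fin (m+2)).succAbove 0 = 0 := by
  rw [Fin.succAbove_of_castSucc_lt]
  · simp
  · simp [Fin.lt_def]

private lemma sa_one_succ {m : ℕ} (j : Fin m) :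
    (1 : Fin (m+2)).succAbove j.succ = j.succ.succ := by
  rw [Fin.succAbove_of_le_castSucc _ _
    (by rw [Fin.le_def, Fin.coe_castSucc, Fin.val_succ, Fin.val_one]; omega)]

private lemma collapse_col {m : ℕ} (M : Matrix (Fin (m+1)) (Fin (m+1)) ℝ)
    (h : ∀ i : Fin m, M i.succ 0 = 0) :
    M.det = M 0 0 * (M.submatrix Fin.succ Fin.succ).det := by
  rw [Matrix.det_succ_column_zero, Fin.sum_univ_succ]
  have : ∀ i : Fin m, (-1 : ℝ) ^ ((i.succ : Fin (m+1)) : ℕ) * M i.succ 0 *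
      (M.submatrix (Fin.succAbove i.succ) Fin.succ).det = 0 := by
    intro i; rw [h i]; ring
  rw [Finset.sum_congr rfl (fun i _ => this i), Finset.sum_const, smul_zero,
    add_zero, Fin.succAbove_zero]
  simp

private lemma collapse_row {m : ℕ} (M : Matrix (Fin (m+1)) (Fin (m+1)) ℝ)
    (h : ∀ j : Fin m, M 0 j.succ = 0) :
    M.det = M 0 0 * (M.submatrix Fin.succ Fin.succ).det := by
  rw [Matrix.det_succ_row_zero, Fin.sum_univ_succ]
  have : ∀ j : Fin m, (-1 : ℝ) ^ ((j.succ : Fin (m+1)) : ℕ) * M 0 j.succ *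
      (M.submatrix Fin.succ (Fin.succAbove j.succ)).det = 0 := by
    intro j; rw [h j]; ring
  rw [Finset.sum_congr rfl (fun j _ => this j), Finset.sum_const, smul_zero,
    add_zero, Fin.succAbove_zero]
  simp

private lemma expand_two {m : ℕ} (M : Matrix (Fin (m+2)) (Fin (m+2)) ℝ)
    (h : ∀ j : Fin m, M 0 j.succ.succ = 0) :
    M.det = M 0 0 * (M.submatrix Fin.succ Fin.succ).det
          - M 0 1 * (M.submatrix Fin.succ (Fin.succAbove 1)).det := by
  rw [Matrix.det_succ_row_zero, Fin.sum_univ_succ, Fin.sum_univ_succ]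
  have : ∀ j : Fin m, (-1 : ℝ) ^ ((j.succ.succ : Fin (m+2)) : ℕ) * M 0 j.succ.succ *
      (M.submatrix Fin.succ (Fin.succAbove j.succ.succ)).det = 0 := by
    intro j; rw [h j]; ring
  rw [Finset.sum_congr rfl (fun j _ => this j), Finset.sum_const, smul_zero,
    add_zero, Fin.succAbove_zero]
  simp [Fin.succ_zero_eq_one]
  ring

private lemma smono_gap {k n : ℕ} (f : Fin k → Fin n) (hf : StrictMono f) :
    ∀ (d : ℕ) (i j : Fin k), (j : ℕ) = (i : ℕ) + d → (f i : ℕ) + d ≤ (f j : ℕ) := by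
  intro d
  induction d with
  | zero => intro i j h; have : i = j := Fin.ext (by omega); subst this; omega
  | succ d ih =>
    intro i j h
    have hjk : (j:ℕ) - 1 < k := by omega
    have h1 : (f ⟨(j:ℕ)-1, hjk⟩ : ℕ) < f j := hf (by simp [Fin.lt_def]; omega)
    have h2 := ih i ⟨(j:ℕ)-1, hjk⟩ (by simp; omega)
    omega

private def CCfun {n : ℕ} (c : Fin n → ℝ) (p : Fin n) : ℝ :=
  if (p : ℕ) = 0 then 0
  else c ⟨(p : ℕ) - 1, Nat.lt_of_le_of_lt (Nat.sub_le _ _) p.isLt⟩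

private lemma key {n : ℕ} (a b c : Fin n → ℝ)
    (hb : ∀ i, 0 ≤ b i) (hc : ∀ i, 0 ≤ c i)
    (hdom : ∀ i : Fin n, (if (i : ℕ) + 1 < n then b i else 0) + CCfun c i ≤ a i)
    (T : Matrix (Fin n) (Fin n) ℝ)
    (hT : ∀ i j : Fin n, T i j =
      if i = j then a i
      else if (i : ℕ) + 1 = (j : ℕ) then b i
      else if (j : ℕ) + 1 = (i : ℕ) then c j
      else 0) :
    ∀ k : ℕ,
      (∀ (r s : Fin k → Fin n), StrictMono r → StrictMono s →
        0 ≤ (T.submatrix r s).det) ∧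
      (∀ (r s : Fin (k+1) → Fin n), StrictMono r → StrictMono s → r 0 = s 0 →
        CCfun c (r 0) * (T.submatrix (r ∘ Fin.succ) (s ∘ Fin.succ)).det
          ≤ (T.submatrix r s).det) := by
  -- entry lemmas
  have hTd : ∀ i j : Fin n, (i:ℕ) = (j:ℕ) → T i j = a i := by
    intro i j h; rw [hT, if_pos (Fin.ext h)]
  have hTb : ∀ i j : Fin n, (i:ℕ)+1 = (j:ℕ) → T i j = b i := by
    intro i j h
    rw [hT, if_neg (fun hh => by rw [hh] at h; omega), if_pos h]
  have hTc : ∀ i j : Fin n, (j:ℕ)+1 = (i:ℕ) → T i j = c j := by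
    intro i j h
    rw [hT, if_neg (fun hh => by rw [hh] at h; omega), if_neg (by omega), if_pos h]
  have hT0 : ∀ i j : Fin n, ((j:ℕ)+2 ≤ (i:ℕ) ∨ (i:ℕ)+2 ≤ (j:ℕ)) → T i j = 0 := by
    intro i j h
    rw [hT, if_neg (fun hh => by rw [hh] at h; omega), if_neg (by omega), if_neg (by omega)]
  have hCC0 : ∀ p, 0 ≤ CCfun c p := by
    intro p; unfold CCfun; split
    · exact le_refl 0
    · exact hc _
  have hB0 : ∀ p : Fin n, 0 ≤ (if (p:ℕ)+1 < n then b p else 0) := by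
    intro p; split
    · exact hb p
    · exact le_refl 0
  have haC : ∀ p : Fin n, CCfun c p ≤ a p := by
    intro p; have h1 := hdom p; have h2 := hB0 p; linarith
  have hss : ∀ {p : ℕ} (f : Fin (p+1) → Fin n), StrictMono f → StrictMono (f ∘ Fin.succ) :=
    fun f hf x y h => hf (Fin.succ_lt_succ_iff.mpr h)
  intro k
  induction k using Nat.strong_induction_on with
  | _ k ih =>
  have hP : ∀ (r s : Fin k → Fin n), StrictMono r → StrictMono s →
      0 ≤ (T.submatrix r s).det := by
    cases k with
    | zero => intro r s _ _; rw [Matrix.det_fin_zero]; norm_num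
    | succ k =>
      intro r s hr hs
      by_cases h1 : (r 0 : ℕ) = (s 0 : ℕ)
      · have hN1 := (ih k (Nat.lt_succ_self _)).1 (r ∘ Fin.succ) (s ∘ Fin.succ)
          (hss r hr) (hss s hs)
        have hQ := (ih k (Nat.lt_succ_self _)).2 r s hr hs (Fin.ext h1)
        have := mul_nonneg (hCC0 (r 0)) hN1
        linarith
      · by_cases h2 : (r 0 : ℕ) = (s 0 : ℕ) + 1
        · rw [collapse_col (T.submatrix r s) (by
            intro i
            show T (r i.succ) (s 0) = 0
            have : (r 0 : ℕ) < (r i.succ : ℕ) := hr (Fin.succ_pos i)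
            exact hT0 _ _ (Or.inl (by omega)))]
          refine mul_nonneg ?_ ?_
          · show 0 ≤ T (r 0) (s 0)
            rw [hTc _ _ h2.symm]; exact hc _
          · rw [Matrix.submatrix_submatrix]
            exact (ih k (Nat.lt_succ_self _)).1 _ _ (hss r hr) (hss s hs)
        · by_cases h3 : (s 0 : ℕ) = (r 0 : ℕ) + 1
          · rw [collapse_row (T.submatrix r s) (by
              intro j
              show T (r 0) (s j.succ) = 0
              have : (s 0 : ℕ) < (s j.succ : ℕ) := hs (Fin.succ_pos j)
              exact hT0 _ _ (Or.inr (by omega)))]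
            refine mul_nonneg ?_ ?_
            · show 0 ≤ T (r 0) (s 0)
              rw [hTb _ _ h3.symm]; exact hb _
            · rw [Matrix.submatrix_submatrix]
              exact (ih k (Nat.lt_succ_self _)).1 _ _ (hss r hr) (hss s hs)
          · by_cases h4 : (s 0 : ℕ) + 2 ≤ (r 0 : ℕ)
            · refine le_of_eq (Matrix.det_eq_zero_of_column_eq_zero 0 ?_).symm
              intro i
              show T (r i) (s 0) = 0
              have : (r 0 : ℕ) ≤ (r i : ℕ) := hr.monotone (Fin.zero_le i)
              exact hT0 _ _ (Or.inl (by omega))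
            · have h5 : (r 0 : ℕ) + 2 ≤ (s 0 : ℕ) := by omega
              refine le_of_eq (Matrix.det_eq_zero_of_row_eq_zero 0 ?_).symm
              intro j
              show T (r 0) (s j) = 0
              have : (s 0 : ℕ) ≤ (s j : ℕ) := hs.monotone (Fin.zero_le j)
              exact hT0 _ _ (Or.inr (by omega))
  refine ⟨hP, ?_⟩
  intro r s hr hs hrs
  cases k with
  | zero =>
    have hM : (T.submatrix r s).det = a (r 0) := by
      rw [Matrix.det_fin_one]
      show T (r 0) (s 0) = a (r 0)
      exact hTd _ _ (congrArg Fin.val hrs)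
    have hN : (T.submatrix (r ∘ Fin.succ) (s ∘ Fin.succ)).det = 1 := Matrix.det_fin_zero
    rw [hM, hN, mul_one]
    exact haC (r 0)
  | succ m =>
    set M := T.submatrix r s with hMdef
    have h0tail : ∀ j : Fin m, M 0 j.succ.succ = 0 := by
      intro j
      show T (r 0) (s j.succ.succ) = 0
      have hg := smono_gap s hs ((j:ℕ)+2) 0 j.succ.succ (by simp)
      refine hT0 _ _ (Or.inr ?_)
      have hv := congrArg Fin.val hrs
      omega
    have hdet := expand_two M h0tail
    have hM00 : M 0 0 = a (r 0) := hTd _ _ (congrArg Fin.val hrs)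
    have hA : M.submatrix Fin.succ Fin.succ
        = T.submatrix (r ∘ Fin.succ) (s ∘ Fin.succ) :=
      Matrix.submatrix_submatrix T r s Fin.succ Fin.succ
    have hBcol : ∀ i : Fin m,
        (M.submatrix Fin.succ (Fin.succAbove 1)) i.succ 0 = 0 := by
      intro i
      show M i.succ.succ ((1 : Fin (m+2)).succAbove 0) = 0
      rw [sa_one_zero]
      show T (r i.succ.succ) (s 0) = 0
      have hg := smono_gap r hr ((i:ℕ)+2) 0 i.succ.succ (by simp)
      refine hT0 _ _ (Or.inl ?_)
      omega
    have hBdet : (M.submatrix Fin.succ (Fin.succAbove 1)).det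
        = M 1 0 * (T.submatrix (r ∘ Fin.succ ∘ Fin.succ) (s ∘ Fin.succ ∘ Fin.succ)).det := by
      have h01 : Fin.succ (0 : Fin (m+1)) = (1 : Fin (m+2)) := by
        apply Fin.ext; simp
      have hfst : (M.submatrix Fin.succ (Fin.succAbove 1)) 0 0 = M 1 0 := by
        show M (Fin.succ (0 : Fin (m+1))) ((1 : Fin (m+2)).succAbove 0) = M 1 0
        rw [sa_one_zero, h01]
      have hsnd : (M.submatrix Fin.succ (Fin.succAbove 1)).submatrix Fin.succ Fin.succ
          = T.submatrix (r ∘ Fin.succ ∘ Fin.succ) (s ∘ Fin.succ ∘ Fin.succ) := by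
        ext i j
        show M i.succ.succ ((1 : Fin (m+2)).succAbove j.succ) = _
        rw [sa_one_succ]
        rfl
      rw [collapse_col _ hBcol, hfst, hsnd]
    have hN1 : 0 ≤ (T.submatrix (r ∘ Fin.succ) (s ∘ Fin.succ)).det :=
      hP _ _ (hss r hr) (hss s hs)
    have hN2 : 0 ≤ (T.submatrix (r ∘ Fin.succ ∘ Fin.succ) (s ∘ Fin.succ ∘ Fin.succ)).det := by
      refine (ih m (by omega)).1 _ _ ?_ ?_
      · exact fun x y h => hr (Fin.succ_lt_succ_iff.mpr (Fin.succ_lt_succ_iff.mpr h))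
      · exact fun x y h => hs (Fin.succ_lt_succ_iff.mpr (Fin.succ_lt_succ_iff.mpr h))
    set N1 := (T.submatrix (r ∘ Fin.succ) (s ∘ Fin.succ)).det with hN1def
    set N2 := (T.submatrix (r ∘ Fin.succ ∘ Fin.succ) (s ∘ Fin.succ ∘ Fin.succ)).det with hN2def
    rw [hA] at hdet
    rw [hBdet] at hdet
    have hv0 : (r 0 : ℕ) = (s 0 : ℕ) := congrArg Fin.val hrs
    by_cases hadj : ((s 1 : ℕ) = (r 0 : ℕ) + 1 ∧ (r 1 : ℕ) = (r 0 : ℕ) + 1)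
    · obtain ⟨ha1, ha2⟩ := hadj
      have hM01 : M 0 1 = b (r 0) := hTb _ _ ha1.symm
      have hM10 : M 1 0 = c (s 0) := hTc _ _ (by omega)
      have hr1s1 : (r ∘ Fin.succ) 0 = (s ∘ Fin.succ) 0 := by
        refine Fin.ext ?_
        show ((r (Fin.succ 0)) : ℕ) = ((s (Fin.succ 0)) : ℕ)
        rw [Fin.succ_zero_eq_one]
        omega
      have hQm := (ih m (by omega)).2 (r ∘ Fin.succ) (s ∘ Fin.succ)
        (hss r hr) (hss s hs) hr1s1
      have hCCr1 : CCfun c ((r ∘ Fin.succ) 0) = c (s 0) := by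
        show CCfun c (r (Fin.succ 0)) = c (s 0)
        rw [Fin.succ_zero_eq_one]
        unfold CCfun
        rw [if_neg (by omega)]
        congr 1
        exact Fin.ext (by simp; omega)
      rw [hCCr1] at hQm
      have hQm2 : c (s 0) * N2 ≤ N1 := hQm
      have hbn : (r 0 : ℕ) + 1 < n := by have := (s 1).isLt; omega
      have hdom' := hdom (r 0)
      rw [if_pos hbn] at hdom'
      -- goal : CCfun c (r 0) * N1 ≤ M.det
      rw [hdet, hM00, hM01, hM10]
      have e1 := mul_le_mul_of_nonneg_right hdom' hN1
      have e2 : b (r 0) * (c (s 0) * N2) ≤ b (r 0) * N1 :=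
        mul_le_mul_of_nonneg_left hQm2 (hb _)
      nlinarith [e1, e2]
    · have hzero : M 0 1 = 0 ∨ M 1 0 = 0 := by
        rcases not_and_or.mp hadj with h | h
        · left
          have h01 : (s 0 : ℕ) < (s 1 : ℕ) := hs (by rw [Fin.lt_def]; simp)
          exact hT0 _ _ (Or.inr (by omega))
        · right
          have h01 : (r 0 : ℕ) < (r 1 : ℕ) := hr (by rw [Fin.lt_def]; simp)
          exact hT0 _ _ (Or.inl (by omega))
      have hdet2 : M.det = a (r 0) * N1 := by
        rcases hzero with h | h
        · rw [hdet, hM00, h]; ring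
        · rw [hdet, hM00, h]; ring
      rw [hdet2]
      have := mul_le_mul_of_nonneg_right (haC (r 0)) hN1
      linarith

theorem stmt5 {n : ℕ} (a b c : Fin n → ℝ)
    (hb : ∀ i, 0 ≤ b i) (hc : ∀ i, 0 ≤ c i)
    (hdom : ∀ i : Fin n,
      (if (i : ℕ) + 1 < n then b i else 0) +
      (if (i : ℕ) = 0 then 0
        else c ⟨(i : ℕ) - 1, Nat.lt_of_le_of_lt (Nat.sub_le _ _) i.isLt⟩) ≤ a i)
    (T : Matrix (Fin n) (Fin n) ℝ)
    (hT : ∀ i j : Fin n, T i j =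
      if i = j then a i
      else if (i : ℕ) + 1 = (j : ℕ) then b i
      else if (j : ℕ) + 1 = (i : ℕ) then c j
      else 0) :
    TotallyNonneg T := by
  intro k r s hr hs
  exact (key a b c hb hc (fun i => hdom i) T hT k).1 r s hr hs
end

section
/- Let A be an n×n totally positive matrix (all minors positive) and x ∈ R^n a nonzero vector. Then s^+(Ax) ≤ s^-(x), i.e., multiplication by A does not increase the number of sign variations. -/
open Matrix Polynomial

/-!
Suppose `s⁺(Ax) > k := s⁻(x)`. Choose indices `i₀ < ⋯ < i_{k+1}` at which `Ax` weakly alternates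
in sign, and split `x` into its `k + 1` sign blocks: `x = V a` with `a = (ε, -ε, ε, …)` and `V ≥ 0`
whose `p`-th column is `|x|` on block `p`. Expanding multilinearly, every `(k+1)`-minor of the
`(k+2) × (k+1)` matrix `W = (A V)(i_t, ·)` is a sum of minors of `A` with nonnegative weights,
one of them positive, hence positive. The bordered matrix `[W a | W]` is singular, and its Laplace
expansion along the first column is a sum of terms of one sign, so `(Ax)(i_t) = (W a)_t = 0` for
all `t`. Then `W a = 0` with a nonsingular `(k+1)`-block of `W`, forcing `a = 0`.
-/

open Finset in
theorem Matrix.det_mul_eq_sum_prod_mul_det {R ι κ : Type*} [CommRing R] [Fintype ι] [DecidableEq ι]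
    [Fintype κ] (M : Matrix ι κ R) (V : Matrix κ ι R) :
    (M * V).det = ∑ p : ι → κ, (∏ i, V (p i) i) * (M.submatrix id p).det := by
  simp only [det_apply', mul_apply, prod_univ_sum, mul_sum, Fintype.piFinset_univ, submatrix_apply,
    id, prod_mul_distrib]
  rw [sum_comm]
  exact sum_congr rfl fun p _ => sum_congr rfl fun σ _ => by ring

structure OrderedNonnegColumns {n m : ℕ} (V : Matrix (Fin n) (Fin m) ℝ) : Prop where
  nonneg : ∀ j p, 0 ≤ V j p
  exists_ne_zero : ∀ p, ∃ j, V j p ≠ 0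
  lt_of_ne_zero : ∀ {i j p q}, p < q → V i p ≠ 0 → V j q ≠ 0 → i < j

theorem det_mul_pos_of_orderedNonnegColumns {m n : ℕ} (M : Matrix (Fin m) (Fin n) ℝ)
    (hM : ∀ σ : Fin m → Fin n, StrictMono σ → 0 < (M.submatrix id σ).det)
    {V : Matrix (Fin n) (Fin m) ℝ} (hV : OrderedNonnegColumns V) : 0 < (M * V).det := by
  rw [det_mul_eq_sum_prod_mul_det]
  have hpos : ∀ σ : Fin m → Fin n, (∀ i, V (σ i) i ≠ 0) →
      0 < (∏ i, V (σ i) i) * (M.submatrix id σ).det := fun σ hσ =>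
    mul_pos (Finset.prod_pos fun i _ => (hV.nonneg _ _).lt_of_ne' (hσ i))
      (hM σ fun i j hij => hV.lt_of_ne_zero hij (hσ i) (hσ j))
  choose σ₀ hσ₀ using hV.exists_ne_zero
  refine Finset.sum_pos' (fun σ _ => ?_) ⟨σ₀, Finset.mem_univ _, hpos σ₀ hσ₀⟩
  by_cases hσ : ∀ i, V (σ i) i ≠ 0
  · exact (hpos σ hσ).le
  · obtain ⟨i, hi⟩ := not_forall_not.mp hσ
    rw [Finset.prod_eq_zero (f := fun i => V (σ i) i) (Finset.mem_univ i) hi, zero_mul]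

theorem eq_zero_of_alternating_mulVec {m : ℕ} (W : Matrix (Fin (m + 1)) (Fin m) ℝ)
    (hW : ∀ t : Fin (m + 1), 0 < (W.submatrix t.succAbove id).det) {a : Fin m → ℝ} {ε : ℝ}
    (hε : ε ≠ 0)
    (halt : ∀ t : Fin (m + 1), 0 ≤ ε * (-1) ^ (t : ℕ) * (W *ᵥ a) t) : a = 0 := by
  set u := W *ᵥ a
  let N : Matrix (Fin (m + 1)) (Fin (m + 1)) ℝ := Matrix.of fun t => Fin.cons (u t) (W t)
  have hN : N.det = 0 := by
    refine exists_mulVec_eq_zero_iff.mp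
      ⟨Fin.cons (-1) a, fun h => by simpa using congrFun h 0, ?_⟩
    ext t
    simp [N, u, mulVec, dotProduct, Fin.sum_univ_succ]
  have hminor (t : Fin (m + 1)) :
      N.submatrix t.succAbove Fin.succ = W.submatrix t.succAbove id := by
    ext; simp [N]
  have hsum :
      ∑ t : Fin (m + 1), ε * (-1) ^ (t : ℕ) * u t * (W.submatrix t.succAbove id).det = 0 := by
    rw [det_succ_column_zero] at hN
    simpa [N, hminor, Finset.mul_sum, mul_assoc] using congrArg (ε * ·) hN
  have hu : u = 0 := funext fun t => by
    have := (Finset.sum_eq_zero_iff_of_nonneg fun t _ => mul_nonneg (halt t) (hW t).le).mp hsum t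
      (Finset.mem_univ t)
    simpa [hε, (hW t).ne'] using this
  have hlast := hW (Fin.last m)
  rw [Fin.succAbove_last] at hlast
  exact eq_zero_of_mulVec_eq_zero hlast.ne' (funext fun s => congrFun hu s.castSucc)

theorem countSignChanges_cons_cons (a b : ℝ) (l : List ℝ) :
    countSignChanges (a :: b :: l) = (if a * b < 0 then 1 else 0) + countSignChanges (b :: l) := by
  by_cases h : a * b < 0 <;> simp [countSignChanges, h, Nat.add_comm]

theorem countSignChanges_le_length (l : List ℝ) : countSignChanges l ≤ l.length :=
  (List.length_filter_le _ _).trans (by simp)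

theorem filter_ofFn_ne_nil {n : ℕ} {x : Fin n → ℝ} (hx : x ≠ 0) :
    (List.ofFn x).filter (· ≠ 0) ≠ [] := by
  obtain ⟨i, hi⟩ := Function.ne_iff.mp hx
  simpa [List.filter_eq_nil_iff] using ⟨i, hi⟩

theorem filter_ofFn_cons_zero {n : ℕ} (x : Fin n → ℝ) :
    (List.ofFn (Fin.cons 0 x : Fin (n + 1) → ℝ)).filter (· ≠ 0) = (List.ofFn x).filter (· ≠ 0) := by
  simp

theorem filter_ofFn_cons {n : ℕ} {a : ℝ} (ha : a ≠ 0) (x : Fin n → ℝ) :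
    (List.ofFn (Fin.cons a x : Fin (n + 1) → ℝ)).filter (· ≠ 0) =
      a :: (List.ofFn x).filter (· ≠ 0) := by
  simp [ha]

theorem sMinus_cons_zero {n : ℕ} (x : Fin n → ℝ) :
    sMinus (Fin.cons 0 x : Fin (n + 1) → ℝ) = sMinus x := by
  rw [sMinus, filter_ofFn_cons_zero, sMinus]

theorem monotone_cons_zero {n : ℕ} {f : Fin n → ℕ} (hf : Monotone f) :
    Monotone (Fin.cons 0 f : Fin (n + 1) → ℕ) := by
  intro i j hij
  cases i using Fin.cases with
  | zero => exact Nat.zero_le _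
  | succ i =>
    cases j using Fin.cases with
    | zero => exact absurd hij (by simp)
    | succ j => simpa using hf (Fin.succ_le_succ_iff.1 hij)

theorem exists_sign_mul_pos {a : ℝ} (ha : a ≠ 0) : ∃ ε : ℝ, (ε = 1 ∨ ε = -1) ∧ 0 < ε * a := by
  rcases ha.lt_or_gt with h | h
  · exact ⟨-1, Or.inr rfl, by linarith⟩
  · exact ⟨1, Or.inl rfl, by linarith⟩

/-- `B j` is the number of the sign block of `x` containing `j`, and `ε` is the sign of the first
nonzero entry of `x`. -/
structure SignBlocks {n : ℕ} (x : Fin n → ℝ) (ε : ℝ) (B : Fin n → ℕ) : Prop where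
  sign_eq : ε = 1 ∨ ε = -1
  mono : Monotone B
  le_sMinus : ∀ j, B j ≤ sMinus x
  sign_nonneg : ∀ j, 0 ≤ ε * (-1) ^ B j * x j
  exists_ne_zero : ∀ p ≤ sMinus x, ∃ j, B j = p ∧ x j ≠ 0
  head_pos : ∀ b l, (List.ofFn x).filter (· ≠ 0) = b :: l → 0 < ε * b

namespace SignBlocks

variable {n : ℕ} {x : Fin n → ℝ} {ε : ℝ} {B : Fin n → ℕ}

theorem cons_zero (h : SignBlocks x ε B) :
    SignBlocks (Fin.cons 0 x : Fin (n + 1) → ℝ) ε (Fin.cons 0 B) where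
  sign_eq := h.sign_eq
  mono := monotone_cons_zero h.mono
  le_sMinus j := by
    rw [sMinus_cons_zero]
    cases j using Fin.cases <;> simp [h.le_sMinus]
  sign_nonneg j := by cases j using Fin.cases <;> simp [h.sign_nonneg]
  exists_ne_zero p hp := by
    rw [sMinus_cons_zero] at hp
    obtain ⟨j, hj⟩ := h.exists_ne_zero p hp
    exact ⟨j.succ, by simpa using hj⟩
  head_pos := by rw [filter_ofFn_cons_zero]; exact h.head_pos

theorem cons_of_eq_zero {a : ℝ} (hε : ε = 1 ∨ ε = -1) (ha : 0 < ε * a) :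
    SignBlocks (Fin.cons a 0 : Fin (n + 1) → ℝ) ε 0 := by
  have hfilter : (List.ofFn (Fin.cons a 0 : Fin (n + 1) → ℝ)).filter (· ≠ 0) = [a] := by
    rw [filter_ofFn_cons (by rintro rfl; simp at ha)]
    simp
  have hs : sMinus (Fin.cons a 0 : Fin (n + 1) → ℝ) = 0 := by rw [sMinus, hfilter]; rfl
  refine ⟨hε, monotone_const, fun _ => Nat.zero_le _, fun j => ?_, fun p hp => ?_, ?_⟩
  · cases j using Fin.cases <;> simp [ha.le]
  · exact ⟨0, by simp at hp ⊢; omega, by simpa using right_ne_zero_of_mul ha.ne'⟩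
  · simp only [hfilter, List.cons.injEq]
    rintro b l ⟨rfl, -⟩
    exact ha

/-- Prepending a nonzero entry `a` opens a new block exactly when `a` and the first nonzero entry
`b` of `x` have opposite signs. -/
theorem cons {a b ε' : ℝ} {l : List ℝ} (h : SignBlocks x ε' B)
    (hx : (List.ofFn x).filter (· ≠ 0) = b :: l) (hε : ε = 1 ∨ ε = -1) (ha : 0 < ε * a) :
    SignBlocks (Fin.cons a x : Fin (n + 1) → ℝ) ε
      (Fin.cons 0 fun j => B j + if a * b < 0 then 1 else 0) := by
  set δ := if a * b < 0 then 1 else 0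
  have ha0 : a ≠ 0 := right_ne_zero_of_mul ha.ne'
  have hfilter : (List.ofFn (Fin.cons a x : Fin (n + 1) → ℝ)).filter (· ≠ 0) = a :: b :: l := by
    rw [filter_ofFn_cons ha0, hx]
  have hs : sMinus (Fin.cons a x : Fin (n + 1) → ℝ) = δ + sMinus x := by
    rw [sMinus, hfilter, countSignChanges_cons_cons, sMinus, hx]
  have hδ : δ ≤ 1 := by simp only [δ]; split_ifs <;> omega
  have hεε' : ε * (-1) ^ δ = ε' := by
    have hb := h.head_pos b l hx
    rcases hε with rfl | rfl <;> rcases h.sign_eq with rfl | rfl <;> simp only [δ] <;>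
      split_ifs <;> nlinarith
  refine ⟨hε, monotone_cons_zero (h.mono.add_const δ), fun j => ?_, fun j => ?_, fun p hp => ?_, ?_⟩
  · rw [hs]
    cases j using Fin.cases <;> simp [h.le_sMinus, add_comm δ]
  · cases j using Fin.cases with
    | zero => simpa using ha.le
    | succ j => simpa [pow_add, ← hεε', mul_comm, mul_left_comm, mul_assoc] using h.sign_nonneg j
  · rcases Nat.eq_zero_or_pos p with rfl | hp0
    · exact ⟨0, by simp, by simpa using ha0⟩
    · obtain ⟨j, hj, hxj⟩ := h.exists_ne_zero (p - δ) (by omega)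
      exact ⟨j.succ, by simp; omega, by simpa using hxj⟩
  · rw [hfilter]
    rintro c l' hc
    rw [(List.cons.inj hc).1] at ha
    exact ha

end SignBlocks

theorem exists_signBlocks : ∀ {n : ℕ} {x : Fin n → ℝ}, x ≠ 0 → ∃ ε B, SignBlocks x ε B
  | 0, x, hx => absurd (Subsingleton.elim x 0) hx
  | n + 1, x, hx => by
    obtain ⟨a, x, rfl⟩ : ∃ a x', x = Fin.cons a x' := ⟨_, _, (Fin.cons_self_tail x).symm⟩
    by_cases ha : a = 0
    · subst ha
      have hx' : x ≠ 0 := by rintro rfl; exact hx Matrix.cons_zero_zero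
      obtain ⟨ε, B, hB⟩ := exists_signBlocks hx'
      exact ⟨ε, _, hB.cons_zero⟩
    obtain ⟨ε, hε, hεa⟩ := exists_sign_mul_pos ha
    by_cases hx' : x = 0
    · subst hx'
      exact ⟨ε, 0, SignBlocks.cons_of_eq_zero hε hεa⟩
    obtain ⟨ε', B, hB⟩ := exists_signBlocks hx'
    obtain ⟨b, l, hbl⟩ := List.exists_cons_of_ne_nil (filter_ofFn_ne_nil hx')
    exact ⟨ε, _, hB.cons hbl hε hεa⟩

theorem exists_isCompletion_sPlus_eq {n : ℕ} (z : Fin n → ℝ) :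
    ∃ y, IsCompletion z y ∧ sPlus z = countSignChanges (List.ofFn y) := by
  have hcompl : IsCompletion z fun i => if z i = 0 then 1 else z i := fun i => by
    by_cases h : z i = 0 <;> simp [h]
  refine Nat.sSup_mem (s := {m | ∃ y, IsCompletion z y ∧ m = countSignChanges (List.ofFn y)})
    ⟨_, _, hcompl, rfl⟩ ⟨n, ?_⟩
  rintro _ ⟨y, -, rfl⟩
  exact (countSignChanges_le_length _).trans (by simp)

theorem IsCompletion.ne_zero {n : ℕ} {z y : Fin n → ℝ} (h : IsCompletion z y) (i : Fin n) :
    y i ≠ 0 := by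
  rcases h i with ⟨hz, hy⟩ | ⟨-, hy | hy⟩ <;> simp [*]

theorem sMinus_zero {n : ℕ} : sMinus (0 : Fin n → ℝ) = 0 := by
  simp [sMinus, List.filter_eq_nil_iff.2, countSignChanges]

theorem sMinus_of_forall_ne_zero {n : ℕ} {y : Fin n → ℝ} (hy : ∀ i, y i ≠ 0) :
    sMinus y = countSignChanges (List.ofFn y) := by
  rw [sMinus, List.filter_eq_self.2]
  simpa [List.mem_ofFn] using hy

/-- Alternating indices are read off from the sign blocks of a completion realizing `s⁺(z)`. -/
theorem exists_alternating_of_lt_sPlus {n m : ℕ} {z : Fin n → ℝ} (h : m < sPlus z) :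
    ∃ (ε : ℝ) (I : Fin (m + 2) → Fin n),
      ε ≠ 0 ∧ StrictMono I ∧ ∀ t : Fin (m + 2), 0 ≤ ε * (-1) ^ (t : ℕ) * z (I t) := by
  obtain ⟨y, hy, hsup⟩ := exists_isCompletion_sPlus_eq z
  have hm : m < sMinus y := by rwa [sMinus_of_forall_ne_zero hy.ne_zero, ← hsup]
  have hy0 : y ≠ 0 := by
    rintro rfl
    simp [sMinus_zero] at hm
  obtain ⟨ε, B, hB⟩ := exists_signBlocks hy0
  choose I hI using fun t : Fin (m + 2) => hB.exists_ne_zero t (by omega)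
  refine ⟨ε, I, by rcases hB.sign_eq with rfl | rfl <;> norm_num,
    fun s t hst => hB.mono.reflect_lt (by simpa [(hI s).1, (hI t).1] using hst), fun t => ?_⟩
  rcases hy (I t) with ⟨-, hyz⟩ | ⟨hz, -⟩
  · simpa [(hI t).1, hyz] using hB.sign_nonneg (I t)
  · simp [hz]

theorem exists_orderedNonnegColumns_mulVec {n : ℕ} {x : Fin n → ℝ} (hx : x ≠ 0) :
    ∃ (V : Matrix (Fin n) (Fin (sMinus x + 1)) ℝ) (a : Fin (sMinus x + 1) → ℝ),
      OrderedNonnegColumns V ∧ a ≠ 0 ∧ V *ᵥ a = x := by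
  obtain ⟨ε, B, hB⟩ := exists_signBlocks hx
  refine ⟨Matrix.of fun j p => if B j = p then ε * (-1) ^ B j * x j else 0,
    fun p => ε * (-1) ^ (p : ℕ), ⟨fun j p => ?_, fun p => ?_, fun hpq hi hj => ?_⟩, ?_, ?_⟩
  · dsimp only [of_apply]
    split_ifs
    exacts [hB.sign_nonneg j, le_rfl]
  · obtain ⟨j, hj, hxj⟩ := hB.exists_ne_zero p (by omega)
    refine ⟨j, ?_⟩
    rcases hB.sign_eq with rfl | rfl <;> simp [hj, hxj]
  · simp only [of_apply, ne_eq, ite_eq_right_iff, not_forall] at hi hj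
    exact hB.mono.reflect_lt (by rw [hi.1, hj.1]; exact hpq)
  · intro h
    have := congrFun h 0
    rcases hB.sign_eq with rfl | rfl <;> simp at this
  · funext j
    rw [mulVec, dotProduct, Fintype.sum_eq_single ⟨B j, by have := hB.le_sMinus j; omega⟩]
    · have hsq : ε * (-1) ^ B j * (ε * (-1) ^ B j) = 1 := by
        rcases hB.sign_eq with rfl | rfl <;> simp [← mul_pow]
      rw [of_apply, if_pos rfl]
      linear_combination x j * hsq
    · intro p hp
      rw [of_apply, if_neg (fun h => hp (Fin.ext h.symm)), zero_mul]

theorem stmt6 {n : ℕ} (A : Matrix (Fin n) (Fin n) ℝ) (hA : TotallyPos A)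
    (x : Fin n → ℝ) (hx : x ≠ 0) :
    sPlus (A.mulVec x) ≤ sMinus x := by
  by_contra! h
  obtain ⟨ε, I, hε, hI, halt⟩ := exists_alternating_of_lt_sPlus h
  obtain ⟨V, a, hV, ha, hVa⟩ := exists_orderedNonnegColumns_mulVec hx
  refine ha (eq_zero_of_alternating_mulVec ((A * V).submatrix I id) (fun t => ?_) hε fun t => ?_)
  · have hminor : ((A * V).submatrix I id).submatrix t.succAbove id =
        A.submatrix (I ∘ t.succAbove) id * V := rfl
    rw [hminor]
    exact det_mul_pos_of_orderedNonnegColumns _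
      (fun σ hσ => hA _ (I ∘ t.succAbove) σ (hI.comp (Fin.strictMono_succAbove t)) hσ) hV
  · have hz : ((A * V).submatrix I id *ᵥ a) t = (A *ᵥ x) (I t) := by
      change ((A * V) *ᵥ a) (I t) = _
      rw [← mulVec_mulVec, hVa]
    rw [hz]
    exact halt t
end
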